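/- arXiv:2308.02127 — 3 statements merged into one kernel-verified Lean document; each statement's English description precedes it below -/
import Mathlib

section
/- For any complete graph K_n of order n ≥ 4, γ_tc(M(K_n)) = ⌈2n/3⌉. -/
open SimpleGraph

/-- The middle graph `M(G)`: vertices are `V(G) ⊕ E(G)`; an edge-vertex is adjacent to
another edge-vertex iff the edges are distinct and share an endpoint, and a vertex is
adjacent to an edge iff it is incident to it. -/
def middleGraph {V : Type*} (G : SimpleGraph V) : SimpleGraph (V ⊕ G.edgeSet) where
  Adj x y :=
    match x, y with
    | Sum.inl _, Sum.inl _ => False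
    | Sum.inl v, Sum.inr e => v ∈ (e : Sym2 V)
    | Sum.inr e, Sum.inl v => v ∈ (e : Sym2 V)
    | Sum.inr e, Sum.inr f => e ≠ f ∧ ∃ v, v ∈ (e : Sym2 V) ∧ v ∈ (f : Sym2 V)
  symm := by
    constructor
    rintro (v|e) (w|f) h
    · exact h
    · exact h
    · exact h
    · exact ⟨h.1.symm, h.2.imp fun v hv => ⟨hv.2, hv.1⟩⟩
  loopless := by
    constructor
    rintro (v|e) h
    · exact h
    · exact h.1 rfl

/-- `D` is a total dominating set of `G`: every vertex has a neighbour in `D`. -/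
def IsTotalDomSet {V : Type*} (G : SimpleGraph V) (D : Set V) : Prop :=
  ∀ v : V, ∃ u ∈ D, G.Adj v u

/-- `D` is a total outer-connected dominating set of `G`: it is total dominating and
the subgraph induced on the complement of `D` is connected. -/
def IsTOCDomSet {V : Type*} (G : SimpleGraph V) (D : Set V) : Prop :=
  IsTotalDomSet G D ∧ (G.induce Dᶜ).Connected

/-- The total domination number `γₜ(G)`. -/
noncomputable def totalDomNum {V : Type*} (G : SimpleGraph V) : ℕ :=
  sInf {k | ∃ D : Set V, IsTotalDomSet G D ∧ D.ncard = k}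

/-- The total outer-connected domination number `γ_tc(G)`. -/
noncomputable def tocDomNum {V : Type*} (G : SimpleGraph V) : ℕ :=
  sInf {k | ∃ D : Set V, IsTOCDomSet G D ∧ D.ncard = k}

/-- The set of leaves (vertices of degree 1) of `G`. -/
def leafSet {V : Type*} (G : SimpleGraph V) : Set V :=
  {v | ∃ u, G.neighborSet v = {u}}

/-- The wheel graph with hub `none` and rim cycle on `Fin n`. -/
def wheelGraph (n : ℕ) : SimpleGraph (Option (Fin n)) where
  Adj x y :=
    match x, y with
    | none, none => False
    | none, some _ => True
    | some _, none => True
    | some i, some j => (SimpleGraph.cycleGraph n).Adj i j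
  symm := by
    constructor
    rintro (_|i) (_|j) h
    · exact h
    · exact h
    · exact h
    · exact (SimpleGraph.cycleGraph n).symm.symm _ _ h
  loopless := by
    constructor
    rintro (_|i) h
    · exact h
    · exact (SimpleGraph.cycleGraph n).loopless.irrefl i h

/-- The corona `G ∘ K₁`: to each vertex `a` of `G` (copy `Sum.inl a`) a pendant
vertex `Sum.inr a` is attached. -/
def corona {V : Type*} (G : SimpleGraph V) : SimpleGraph (V ⊕ V) where
  Adj x y :=
    match x, y with
    | Sum.inl a, Sum.inl b => G.Adj a b
    | Sum.inl a, Sum.inr b => a = b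
    | Sum.inr a, Sum.inl b => a = b
    | Sum.inr _, Sum.inr _ => False
  symm := by
    constructor
    rintro (a|a) (b|b) h
    · exact G.symm.symm _ _ h
    · exact h.symm
    · exact h.symm
    · exact h
  loopless := by
    constructor
    rintro (a|a) h
    · exact G.loopless.irrefl a h
    · exact h

/-- The 2-corona `G ∘ P₂`: to each vertex `a` of `G` (copy `Sum.inl a`) a path
`Sum.inl a — Sum.inr (Sum.inl a) — Sum.inr (Sum.inr a)` of length 2 is attached. -/
def corona2 {V : Type*} (G : SimpleGraph V) : SimpleGraph (V ⊕ V ⊕ V) where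
  Adj x y :=
    match x, y with
    | Sum.inl a, Sum.inl b => G.Adj a b
    | Sum.inl a, Sum.inr (Sum.inl b) => a = b
    | Sum.inr (Sum.inl a), Sum.inl b => a = b
    | Sum.inr (Sum.inl a), Sum.inr (Sum.inr b) => a = b
    | Sum.inr (Sum.inr a), Sum.inr (Sum.inl b) => a = b
    | _, _ => False
  symm := by
    constructor
    rintro (a|a|a) (b|b|b) h <;> first | exact G.symm h | exact h.symm | exact h
  loopless := by
    constructor
    rintro (a|a|a) h
    · exact G.loopless.irrefl a h
    · exact h
    · exact h

/-- The spider `S_{1,n,n}`: hub `none`, middle vertices `some (.inl i)`,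
leaves `some (.inr i)`; the star `K_{1,n}` with every edge subdivided once. -/
def spiderGraph (n : ℕ) : SimpleGraph (Option (Fin n ⊕ Fin n)) where
  Adj x y :=
    match x, y with
    | none, some (Sum.inl _) => True
    | some (Sum.inl _), none => True
    | some (Sum.inl i), some (Sum.inr j) => i = j
    | some (Sum.inr i), some (Sum.inl j) => i = j
    | _, _ => False
  symm := by
    constructor
    rintro (_|i|i) (_|j|j) h <;> first | exact h.symm | exact h
  loopless := by
    constructor
    rintro (_|i|i) h <;> exact h

/-- The friendship graph `Fₙ`: `n` triangles sharing the common vertex `none`. -/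
def friendshipGraph (n : ℕ) : SimpleGraph (Option (Fin n × Fin 2)) where
  Adj x y :=
    match x, y with
    | none, some _ => True
    | some _, none => True
    | some (i, a), some (j, b) => i = j ∧ a ≠ b
    | none, none => False
  symm := by
    constructor
    rintro (_|⟨i,a⟩) (_|⟨j,b⟩) h <;> first | exact ⟨h.1.symm, h.2.symm⟩ | exact h
  loopless := by
    constructor
    rintro (_|⟨i,a⟩) h
    · exact h
    · exact h.2 rfl

/-!
Lower bound: if `D` totally dominates `M(G)`, the edges `F` in `D` cover `V(G)`, and an edge of `F`
meeting no other edge of `F` can only be dominated by one of its endpoints lying in `D`, different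
such edges by different endpoints. Double counting the incidences between `V(G)` and `F`,
separating vertices of `F`-degree one from those of degree at least two, gives
`2|V| ≤ 3(|F| + #isolated edges of F) ≤ 3|D|`.

Upper bound: in `Kₙ` take `⌈2n/3⌉` edges of a Hamiltonian path, grouped in pairs of adjacent edges.
They totally dominate `M(Kₙ)`, and removing them keeps `M(Kₙ)` connected: the complement of a path
on at least four vertices is connected, and every remaining edge-vertex hangs off its endpoints.
-/

open Finset

section MiddleGraph

variable {V : Type*} {G : SimpleGraph V}

@[simp]
lemma middleGraph_adj_inl_inl {v w : V} : ¬(middleGraph G).Adj (.inl v) (.inl w) :=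
  id

lemma isTotalDomSet_middleGraph_image_inr {F : Set G.edgeSet}
    (hcover : ∀ v, ∃ e ∈ F, v ∈ (e : Sym2 V))
    (hpair : ∀ e ∈ F, ∃ f ∈ F, (middleGraph G).Adj (.inr e) (.inr f)) :
    IsTotalDomSet (middleGraph G) (Sum.inr '' F) := by
  rintro (v | e)
  · obtain ⟨e, he, hve⟩ := hcover v
    exact ⟨.inr e, Set.mem_image_of_mem _ he, hve⟩
  · by_cases he : e ∈ F
    · obtain ⟨f, hf, hadj⟩ := hpair e he
      exact ⟨.inr f, Set.mem_image_of_mem _ hf, hadj⟩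
    · obtain ⟨f, hf, hvf⟩ := hcover (e : Sym2 V).out.1
      exact ⟨.inr f, Set.mem_image_of_mem _ hf, fun h => he (h ▸ hf), _, Sym2.out_fst_mem _, hvf⟩

lemma connected_middleGraph_induce_compl_image_inr {F : Set G.edgeSet} {H : SimpleGraph V}
    (hH : H.Connected) (hHF : ∀ v w, H.Adj v w → ∃ h : G.Adj v w, ⟨s(v, w), h⟩ ∉ F) :
    ((middleGraph G).induce (Sum.inr '' F)ᶜ).Connected := by
  set M := (middleGraph G).induce (Sum.inr '' F)ᶜ
  let ι : V → ((Sum.inr '' F)ᶜ : Set (V ⊕ G.edgeSet)) := fun v => ⟨.inl v, by simp⟩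
  have hι : ∀ v w, H.Adj v w → M.Reachable (ι v) (ι w) := fun v w hvw => by
    obtain ⟨hG, hF⟩ := hHF v w hvw
    let x : ((Sum.inr '' F)ᶜ : Set (V ⊕ G.edgeSet)) := ⟨.inr ⟨s(v, w), hG⟩, by simpa using hF⟩
    have hvx : M.Adj (ι v) x := Sym2.mem_mk_left v w
    have hxw : M.Adj x (ι w) := Sym2.mem_mk_right v w
    exact hvx.reachable.trans hxw.reachable
  have hreach : ∀ v w, M.Reachable (ι v) (ι w) := fun v w =>
    (reachable_iff_reflTransGen _ _).mpr <|
      Relation.ReflTransGen.lift' ι (fun a b h => (reachable_iff_reflTransGen _ _).mp (hι a b h))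
        v w ((reachable_iff_reflTransGen v w).mp (hH.preconnected v w))
  obtain ⟨v₀⟩ := hH.nonempty
  refine (connected_iff_exists_forall_reachable _).mpr ⟨ι v₀, ?_⟩
  rintro ⟨w | e, hx⟩
  · exact hreach v₀ w
  · have hadj : M.Adj ⟨.inr e, hx⟩ (ι (e : Sym2 V).out.1) := Sym2.out_fst_mem _
    exact (hreach _ _).trans hadj.symm.reachable

end MiddleGraph

section EdgeCount

variable {V : Type*} [DecidableEq V] {G : SimpleGraph V} (F : Finset G.edgeSet)

def edgeDegree (v : V) : ℕ :=
  #{e ∈ F | v ∈ e.1}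

def isolatedEdges : Finset G.edgeSet :=
  {e ∈ F | ∀ v ∈ e.1.toFinset, edgeDegree F v ≤ 1}

lemma isolatedEdges_subset : isolatedEdges F ⊆ F :=
  filter_subset _ F

variable {F}

lemma two_le_edgeDegree {v : V} {e f : G.edgeSet} (he : e ∈ F) (hf : f ∈ F) (hef : e ≠ f)
    (hve : v ∈ (e : Sym2 V)) (hvf : v ∈ (f : Sym2 V)) : 2 ≤ edgeDegree F v :=
  one_lt_card.mpr ⟨e, mem_filter.mpr ⟨he, hve⟩, f, mem_filter.mpr ⟨hf, hvf⟩, hef⟩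

lemma sum_edgeDegree [Fintype V] : ∑ v, edgeDegree F v = 2 * #F := by
  simp only [edgeDegree, card_filter]
  rw [sum_comm, mul_comm, ← smul_eq_mul, ← sum_const]
  refine sum_congr rfl fun e _ => ?_
  rw [← card_filter, ← Sym2.card_toFinset_of_not_isDiag _ (G.not_isDiag_of_mem_edgeSet e.2)]
  congr 1
  ext v
  simp

lemma card_isolatedEdges_le {W : Finset V}
    (hdom : ∀ e ∈ F, (∃ w ∈ W, w ∈ (e : Sym2 V)) ∨
      ∃ f ∈ F, e ≠ f ∧ ∃ v, v ∈ (e : Sym2 V) ∧ v ∈ (f : Sym2 V)) :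
    #(isolatedEdges F) ≤ #W := by
  apply card_le_card_of_forall_subsingleton fun (e : G.edgeSet) w => w ∈ (e : Sym2 V)
  · intro e he
    obtain ⟨heF, hdeg⟩ := mem_filter.mp he
    refine (hdom e heF).resolve_right ?_
    rintro ⟨f, hfF, hef, v, hve, hvf⟩
    have := hdeg v (Sym2.mem_toFinset.mpr hve)
    have := two_le_edgeDegree heF hfF hef hve hvf
    omega
  · intro w _ e he f hf
    by_contra hef
    have := (mem_filter.mp he.1).2 w (Sym2.mem_toFinset.mpr he.2)
    have := two_le_edgeDegree (mem_filter.mp he.1).1 (mem_filter.mp hf.1).1 hef he.2 hf.2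
    omega

lemma card_sdiff_isolatedEdges_le [Fintype V] :
    #(F \ isolatedEdges F) ≤ ∑ v with 2 ≤ edgeDegree F v, edgeDegree F v := by
  calc #(F \ isolatedEdges F)
      ≤ #((univ.filter fun v => 2 ≤ edgeDegree F v).biUnion fun v => {e ∈ F | v ∈ e.1}) := by
        refine card_le_card fun e he => ?_
        obtain ⟨heF, hiso⟩ := mem_sdiff.mp he
        simp only [isolatedEdges, mem_filter, heF, true_and, not_forall, not_le] at hiso
        obtain ⟨v, hve, hv⟩ := hiso
        exact mem_biUnion.mpr ⟨v, mem_filter.mpr ⟨mem_univ v, hv⟩,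
          mem_filter.mpr ⟨heF, Sym2.mem_toFinset.mp hve⟩⟩
    _ ≤ _ := card_biUnion_le

lemma two_mul_card_le_three_mul_card_add_card_isolatedEdges [Fintype V]
    (hcover : ∀ v, ∃ e ∈ F, v ∈ (e : Sym2 V)) :
    2 * Fintype.card V ≤ 3 * (#F + #(isolatedEdges F)) := by
  have hpos : ∀ v, 1 ≤ edgeDegree F v := fun v => by
    obtain ⟨e, heF, hve⟩ := hcover v
    exact card_pos.mpr ⟨e, mem_filter.mpr ⟨heF, hve⟩⟩
  have hsplit := sum_filter_add_sum_filter_not univ (fun v => 2 ≤ edgeDegree F v) (edgeDegree F)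
  have hcard := card_filter_add_card_filter_not (s := univ) (fun v => 2 ≤ edgeDegree F v)
  have hhigh : 2 * #{v | 2 ≤ edgeDegree F v} ≤ ∑ v with 2 ≤ edgeDegree F v, edgeDegree F v := by
    rw [mul_comm, ← smul_eq_mul, ← sum_const]
    exact sum_le_sum fun v hv => (mem_filter.mp hv).2
  have hlow : #{v | ¬2 ≤ edgeDegree F v} ≤ ∑ v with ¬2 ≤ edgeDegree F v, edgeDegree F v :=
    card_eq_sum_ones _ ▸ sum_le_sum fun v _ => hpos v
  have hiso := card_sdiff_add_card_eq_card (isolatedEdges_subset F)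
  have := card_sdiff_isolatedEdges_le (F := F)
  rw [sum_edgeDegree] at hsplit
  rw [card_univ] at hcard
  omega

end EdgeCount

lemma IsTotalDomSet.two_mul_card_le_three_mul_ncard {V : Type*} [Fintype V] {G : SimpleGraph V}
    {D : Set (V ⊕ G.edgeSet)} (hD : IsTotalDomSet (middleGraph G) D) :
    2 * Fintype.card V ≤ 3 * D.ncard := by
  classical
  rw [Set.ncard_eq_toFinset_card D, ← card_toLeft_add_card_toRight]
  set T := (Set.toFinite D).toFinset
  have hcover : ∀ v, ∃ e ∈ T.toRight, v ∈ (e : Sym2 V) := fun v => by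
    obtain ⟨u | e, hu, hadj⟩ := hD (.inl v)
    · exact absurd hadj middleGraph_adj_inl_inl
    · exact ⟨e, by simpa [T] using hu, hadj⟩
  have hdom : ∀ e ∈ T.toRight, (∃ w ∈ T.toLeft, w ∈ (e : Sym2 V)) ∨
      ∃ f ∈ T.toRight, e ≠ f ∧ ∃ v, v ∈ (e : Sym2 V) ∧ v ∈ (f : Sym2 V) := fun e _ => by
    obtain ⟨u | f, hu, hadj⟩ := hD (.inr e)
    · exact .inl ⟨u, by simpa [T] using hu, hadj⟩
    · exact .inr ⟨f, by simpa [T] using hu, hadj⟩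
  have := two_mul_card_le_three_mul_card_add_card_isolatedEdges hcover
  have := card_isolatedEdges_le hdom
  omega

/-- The edges `{edgeStart n i, edgeStart n i + 1}`, `i < ⌈2n/3⌉`, of the path `0, 1, …, n - 1`:
pairs of adjacent edges covering the triples `{3k, 3k+1, 3k+2}`, followed by consecutive edges
ending at vertex `n - 1`, the switch placed so that exactly `⌈2n/3⌉` edges are used. -/
def edgeStart (n i : ℕ) : ℕ :=
  min (3 * i / 2) (i + (n - 1 - (2 * n + 2) / 3))

lemma edgeStart_strictMono (n : ℕ) : StrictMono (edgeStart n) :=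
  strictMono_nat_of_lt_succ fun i => by unfold edgeStart; omega

lemma edgeStart_add_one_lt {n i : ℕ} (hn : 3 ≤ n) (hi : i < (2 * n + 2) / 3) :
    edgeStart n i + 1 < n := by
  unfold edgeStart; omega

lemma exists_eq_edgeStart_or_eq_edgeStart_add_one {n v : ℕ} (hv : v < n) :
    ∃ i < (2 * n + 2) / 3, v = edgeStart n i ∨ v = edgeStart n i + 1 :=
  ⟨min (max (2 * v / 3) (v - (n - 1 - (2 * n + 2) / 3) - 1)) ((2 * n + 2) / 3 - 1),
    by unfold edgeStart; omega⟩

lemma exists_edgeStart_adjacent {n i : ℕ} (hn : 3 ≤ n) (hi : i < (2 * n + 2) / 3) :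
    ∃ k < (2 * n + 2) / 3,
      edgeStart n i + 1 = edgeStart n k ∨ edgeStart n k + 1 = edgeStart n i := by
  by_cases h : i + 1 < (2 * n + 2) / 3 ∧ edgeStart n i + 1 = edgeStart n (i + 1)
  · exact ⟨i + 1, h.1, .inl h.2⟩
  · refine ⟨i - 1, by omega, .inr ?_⟩
    unfold edgeStart at h ⊢; omega

section CompleteGraph

variable {n : ℕ}

def pathEdge (a : ℕ) (ha : a + 1 < n) : (completeGraph (Fin n)).edgeSet :=
  ⟨s(⟨a, by omega⟩, ⟨a + 1, ha⟩), by simp⟩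

lemma mem_pathEdge {a : ℕ} {ha : a + 1 < n} {v : Fin n} :
    v ∈ (pathEdge a ha : Sym2 (Fin n)) ↔ v.val = a ∨ v.val = a + 1 := by
  simp [pathEdge, Fin.ext_iff]

lemma pathEdge_inj {a b : ℕ} {ha : a + 1 < n} {hb : b + 1 < n} :
    pathEdge a ha = pathEdge b hb ↔ a = b := by
  simp [pathEdge, Fin.ext_iff]
  omega

lemma pathEdge_mem_edgeSet_pathGraph (a : ℕ) (ha : a + 1 < n) :
    (pathEdge a ha : Sym2 (Fin n)) ∈ (pathGraph n).edgeSet := by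
  simp [pathEdge, pathGraph_adj]

lemma middleGraph_adj_pathEdge {a b : ℕ} (ha : a + 1 < n) (hb : b + 1 < n)
    (hab : a + 1 = b ∨ b + 1 = a) :
    (middleGraph (completeGraph (Fin n))).Adj (.inr (pathEdge a ha)) (.inr (pathEdge b hb)) :=
  ⟨by rw [Ne, pathEdge_inj]; omega, ⟨max a b, by omega⟩,
    mem_pathEdge.mpr (by rw [Fin.val_mk]; omega), mem_pathEdge.mpr (by rw [Fin.val_mk]; omega)⟩

lemma compl_pathGraph_adj_of_add_two_le {a b : Fin n} (h : a.val + 2 ≤ b.val) :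
    (pathGraph n)ᶜ.Adj a b := by
  simp [pathGraph_adj, Fin.ext_iff]
  omega

lemma connected_compl_pathGraph (hn : 4 ≤ n) : (pathGraph n)ᶜ.Connected := by
  refine (connected_iff_exists_forall_reachable _).mpr ⟨⟨0, by omega⟩, fun v => ?_⟩
  obtain ⟨_ | _ | v, hv⟩ := v
  · rfl
  · have h03 := compl_pathGraph_adj_of_add_two_le (n := n) (a := ⟨0, by omega⟩)
      (b := ⟨3, by omega⟩) (by simp)
    have h13 := compl_pathGraph_adj_of_add_two_le (n := n) (a := ⟨1, by omega⟩)
      (b := ⟨3, by omega⟩) (by simp)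
    exact h03.reachable.trans h13.symm.reachable
  · exact (compl_pathGraph_adj_of_add_two_le (by simp)).reachable

end CompleteGraph

theorem exists_isTOCDomSet_middleGraph_completeGraph {n : ℕ} (hn : 4 ≤ n) :
    ∃ D, IsTOCDomSet (middleGraph (completeGraph (Fin n))) D ∧ D.ncard = (2 * n + 2) / 3 := by
  let e : Fin ((2 * n + 2) / 3) → (completeGraph (Fin n)).edgeSet := fun i =>
    pathEdge (edgeStart n i) (edgeStart_add_one_lt (by omega) i.2)
  have he : Function.Injective e := fun i k h =>
    Fin.ext ((edgeStart_strictMono n).injective (pathEdge_inj.mp h))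
  refine ⟨Sum.inr '' Set.range e, ⟨?_, ?_⟩, ?_⟩
  · refine isTotalDomSet_middleGraph_image_inr (fun v => ?_) ?_
    · obtain ⟨i, hi, hv⟩ := exists_eq_edgeStart_or_eq_edgeStart_add_one v.2
      exact ⟨e ⟨i, hi⟩, Set.mem_range_self _, mem_pathEdge.mpr hv⟩
    · rintro _ ⟨i, rfl⟩
      obtain ⟨k, hk, hik⟩ := exists_edgeStart_adjacent (by omega) i.2
      exact ⟨e ⟨k, hk⟩, Set.mem_range_self _, middleGraph_adj_pathEdge _ _ hik⟩
  · refine connected_middleGraph_induce_compl_image_inr (connected_compl_pathGraph hn)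
      fun v w hvw => ⟨hvw.1, ?_⟩
    rintro ⟨i, hi⟩
    have hpath : (e i : Sym2 (Fin n)) ∈ (pathGraph n).edgeSet := pathEdge_mem_edgeSet_pathGraph _ _
    rw [hi] at hpath
    exact hvw.2 hpath
  · rw [← Set.range_comp, Set.ncard_range_of_injective (Sum.inr_injective.comp he), Nat.card_fin]

theorem stmt2 (n : ℕ) (hn : 4 ≤ n) :
    tocDomNum (middleGraph (completeGraph (Fin n))) = (2 * n + 2) / 3 := by
  obtain ⟨D, hD, hcard⟩ := exists_isTOCDomSet_middleGraph_completeGraph hn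
  refine le_antisymm (Nat.sInf_le ⟨D, hD, hcard⟩) (le_csInf ⟨_, D, hD, hcard⟩ ?_)
  rintro k ⟨D', ⟨hD', -⟩, rfl⟩
  have := hD'.two_mul_card_le_three_mul_ncard
  rw [Fintype.card_fin] at this
  omega
end

section
/- Let T be a tree of order n ≥ 4. Then γ_tc(M(T)) = 2n − 2 if and only if T is isomorphic to the star K_{1,n−1}. -/
open SimpleGraph

/-! `M(T)` has `2n - 1` vertices. A leaf `w` of `T` has exactly one neighbour in `M(T)`, the
edge-vertex of its pendant edge, so every total dominating set of `M(T)` contains the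
edge-vertices of all pendant edges. For a star these are all edge-vertices, and the remaining
vertex-vertices are pairwise non-adjacent, so connectivity of the complement leaves room for only
one of them: `γ_tc(M(K_{1,n-1})) ≥ 2n - 2`, and removing one vertex-vertex shows equality. If `T`
is not a star, it has an edge `uv` with both ends of degree at least two; then removing `u` and
`uv` (adjacent in `M(T)`) from `V(M(T))` leaves a total outer-connected dominating set of size
`2n - 3`. -/

lemma tocDomNum_le {V : Type*} {G : SimpleGraph V} {D : Set V} (hD : IsTOCDomSet G D) :
    tocDomNum G ≤ D.ncard :=
  Nat.sInf_le ⟨D, hD, rfl⟩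

lemma le_tocDomNum {V : Type*} {G : SimpleGraph V} {k : ℕ} (hG : ∃ D, IsTOCDomSet G D)
    (h : ∀ D, IsTOCDomSet G D → k ≤ D.ncard) : k ≤ tocDomNum G := by
  obtain ⟨D, hD⟩ := hG
  exact le_csInf ⟨_, D, hD, rfl⟩ fun _ ⟨D', hD', hk⟩ => hk ▸ h D' hD'

namespace SimpleGraph

variable {V W : Type*}

section Star

lemma completeBipartiteGraph_eq_starGraph (α β : Type*) [Unique α] :
    completeBipartiteGraph α β = starGraph (Sum.inl default) := by
  ext (a | b) (a' | b') <;> simp [Unique.eq_default]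

def Iso.starGraphCongr (e : V ≃ W) {r : V} {s : W} (h : e r = s) :
    starGraph r ≃g starGraph s where
  toEquiv := e
  map_rel_iff' := by subst h; simp [e.injective.eq_iff]

lemma Iso.eq_starGraph {G : SimpleGraph V} {r : W} (φ : G ≃g starGraph r) :
    G = starGraph (φ.symm r) := by
  ext u v
  rw [← φ.map_adj_iff, starGraph_adj, starGraph_adj, φ.injective.ne_iff]
  exact and_congr_right' (or_congr φ.toEquiv.eq_symm_apply.symm φ.toEquiv.eq_symm_apply.symm)

lemma nonempty_iso_completeBipartiteGraph_iff [Fintype V] {G : SimpleGraph V} :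
    Nonempty (G ≃g completeBipartiteGraph (Fin 1) (Fin (Fintype.card V - 1))) ↔
      ∃ c, G = starGraph c := by
  rw [completeBipartiteGraph_eq_starGraph]
  constructor
  · rintro ⟨φ⟩
    exact ⟨_, φ.eq_starGraph⟩
  · rintro ⟨c, rfl⟩
    have hcard : Fintype.card V = Fintype.card (Fin 1 ⊕ Fin (Fintype.card V - 1)) := by
      have := Fintype.card_pos_iff.mpr ⟨c⟩
      simp only [Fintype.card_sum, Fintype.card_fin]
      omega
    let e₀ := Fintype.equivOfCardEq hcard
    let e := e₀.trans (Equiv.swap (e₀ c) (Sum.inl default))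
    exact ⟨Iso.starGraphCongr e (Equiv.swap_apply_left _ _)⟩

lemma eq_starGraph_of_adj_adj {G : SimpleGraph V} {c : V} (hG : G.Preconnected)
    (h : ∀ w x, G.Adj c w → G.Adj w x → x = c) : G = starGraph c := by
  have hball : ∀ v, v = c ∨ G.Adj c v := by
    intro v
    induction (reachable_iff_reflTransGen c v).mp (hG c v) with
    | refl => exact Or.inl rfl
    | tail _ hab ih =>
      rcases ih with rfl | hcb
      · exact Or.inr hab
      · exact Or.inl (h _ _ hcb hab)
  ext u v
  rw [starGraph_adj]
  constructor
  · intro huv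
    refine ⟨huv.ne, (hball u).imp_right fun hcu => h _ _ hcu huv⟩
  · rintro ⟨hne, rfl | rfl⟩
    · exact (hball v).resolve_left hne.symm
    · exact ((hball u).resolve_left hne).symm

lemma exists_adj_adj_adj_of_forall_ne_starGraph {G : SimpleGraph V} (hG : G.Connected)
    (h : ∀ c, G ≠ starGraph c) :
    ∃ u v y z, G.Adj u v ∧ G.Adj u y ∧ y ≠ v ∧ G.Adj v z ∧ z ≠ u := by
  have hfar : ∀ c, ∃ w x, G.Adj c w ∧ G.Adj w x ∧ x ≠ c := fun c => by
    by_contra! hc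
    exact h c (eq_starGraph_of_adj_adj hG.preconnected hc)
  obtain ⟨x⟩ := hG.nonempty
  obtain ⟨w, z, hxw, hwz, hzx⟩ := hfar x
  obtain ⟨w', z', hww', hw'z', hz'w⟩ := hfar w
  by_cases hxw' : x = w'
  · exact ⟨w, w', z, z', hww', hwz, hxw' ▸ hzx, hw'z', hz'w⟩
  · exact ⟨w, w', x, z', hww', hxw.symm, hxw', hw'z', hz'w⟩

end Star

lemma IsIndepSet.subsingleton_of_induce_preconnected {G : SimpleGraph V} {s : Set V}
    (hs : G.IsIndepSet s) (hG : (G.induce s).Preconnected) : s.Subsingleton := by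
  intro x hx y hy
  have hbot : G.induce s = ⊥ := by
    ext a b
    simp only [comap_adj, Function.Embedding.subtype_apply, bot_adj, iff_false]
    exact fun hab => hs a.2 b.2 hab.ne hab
  have := hG ⟨x, hx⟩ ⟨y, hy⟩
  rw [hbot, reachable_bot] at this
  exact congrArg Subtype.val this

section MiddleGraph

variable {T : SimpleGraph V}

lemma exists_middleGraph_adj_inr_inl_ne (e : T.edgeSet) (v₀ : V) :
    ∃ w, w ≠ v₀ ∧ (middleGraph T).Adj (Sum.inr e) (Sum.inl w) := by
  obtain ⟨e, he⟩ := e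
  induction e using Sym2.ind with
  | _ a b =>
    by_cases ha : a = v₀
    · exact ⟨b, fun hb => (T.ne_of_adj he) (ha.trans hb.symm), Sym2.mem_mk_right a b⟩
    · exact ⟨a, ha, Sym2.mem_mk_left a b⟩

lemma isTOCDomSet_middleGraph_compl_singleton (hT : ∀ v, ∃ w, T.Adj v w) (v₀ : V) :
    IsTOCDomSet (middleGraph T) {Sum.inl v₀}ᶜ := by
  refine ⟨?_, by rw [compl_compl, induce_singleton_eq_top]; exact connected_top⟩
  rintro (v | e)
  · obtain ⟨w, hvw⟩ := hT v
    exact ⟨Sum.inr ⟨s(v, w), hvw⟩, by simp, Sym2.mem_mk_left v w⟩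
  · obtain ⟨w, hw, hadj⟩ := exists_middleGraph_adj_inr_inl_ne e v₀
    exact ⟨Sum.inl w, by simpa using hw, hadj⟩

lemma isTOCDomSet_middleGraph_compl_pair (hT : ∀ v, ∃ w, T.Adj v w) {u v y z : V}
    (huv : T.Adj u v) (huy : T.Adj u y) (hyv : y ≠ v) (hvz : T.Adj v z) (hzu : z ≠ u) :
    IsTOCDomSet (middleGraph T) {Sum.inl u, Sum.inr ⟨s(u, v), huv⟩}ᶜ := by
  refine ⟨?_, by rw [compl_compl]; exact induce_pair_connected_of_adj (Sym2.mem_mk_left u v)⟩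
  rintro (w | e)
  · have hother : ∃ t, ∃ hwt : T.Adj w t, s(w, t) ≠ s(u, v) := by
      by_cases hwu : w = u
      · subst hwu
        exact ⟨y, huy, mt Sym2.congr_right.mp hyv⟩
      by_cases hwv : w = v
      · subst hwv
        exact ⟨z, hvz, by rw [Sym2.eq_swap (a := u)]; exact mt Sym2.congr_right.mp hzu⟩
      obtain ⟨t, hwt⟩ := hT w
      refine ⟨t, hwt, fun h => ?_⟩
      have := h ▸ Sym2.mem_mk_left w t
      rcases Sym2.mem_iff.mp this with rfl | rfl <;> contradiction
    obtain ⟨t, hwt, hne⟩ := hother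
    exact ⟨Sum.inr ⟨s(w, t), hwt⟩, by simp [Subtype.ext_iff, hne], Sym2.mem_mk_left w t⟩
  · obtain ⟨w, hw, hadj⟩ := exists_middleGraph_adj_inr_inl_ne e u
    exact ⟨Sum.inl w, by simpa using hw, hadj⟩

lemma IsTotalDomSet.inr_mem_of_leaf {D : Set (V ⊕ T.edgeSet)}
    (hD : IsTotalDomSet (middleGraph T) D) {w : V} (hw : ∀ x y, T.Adj w x → T.Adj w y → x = y)
    (e : T.edgeSet) (hwe : w ∈ (e : Sym2 V)) : Sum.inr e ∈ D := by
  obtain ⟨(x | f), hfD, hwf⟩ := hD (Sum.inl w)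
  · exact hwf.elim
  have hedge : ∀ g : T.edgeSet, (hg : w ∈ (g : Sym2 V)) → T.Adj w (Sym2.Mem.other hg) :=
    fun g hg => by rw [← mem_edgeSet, Sym2.other_spec hg]; exact g.2
  have : f = e := Subtype.ext <| by
    rw [← Sym2.other_spec hwf, ← Sym2.other_spec hwe, hw _ _ (hedge f hwf) (hedge e hwe)]
  exact this ▸ hfD

lemma IsTotalDomSet.range_inr_subset_of_starGraph {c : V} {D : Set (V ⊕ (starGraph c).edgeSet)}
    (hD : IsTotalDomSet (middleGraph (starGraph c)) D) : Set.range Sum.inr ⊆ D := by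
  have hleaf : ∀ w, w ≠ c → ∀ x y,
      (starGraph c).Adj w x → (starGraph c).Adj w y → x = y := by
    intro w hw x y hx hy
    simp only [starGraph_adj] at hx hy
    grind
  rintro _ ⟨⟨e, he⟩, rfl⟩
  induction e using Sym2.ind with
  | _ a b =>
    by_cases ha : a = c
    · have hb : b ≠ c := fun hb => (starGraph c).ne_of_adj he (ha.trans hb.symm)
      exact hD.inr_mem_of_leaf (hleaf b hb) _ (Sym2.mem_mk_right a b)
    · exact hD.inr_mem_of_leaf (hleaf a ha) _ (Sym2.mem_mk_left a b)

lemma IsTOCDomSet.ncard_compl_le_one_of_starGraph [Finite V] {c : V}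
    {D : Set (V ⊕ (starGraph c).edgeSet)} (hD : IsTOCDomSet (middleGraph (starGraph c)) D) :
    Dᶜ.ncard ≤ 1 := by
  refine Set.ncard_le_one_iff_subsingleton.mpr <|
    IsIndepSet.subsingleton_of_induce_preconnected ?_ hD.2.preconnected
  have hinl : ∀ x ∈ Dᶜ, ∃ v, x = Sum.inl v := by
    rintro (v | e) hx
    · exact ⟨v, rfl⟩
    · exact (hx (hD.1.range_inr_subset_of_starGraph ⟨e, rfl⟩)).elim
  intro x hx y hy _
  obtain ⟨v, rfl⟩ := hinl x hx
  obtain ⟨w, rfl⟩ := hinl y hy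
  exact id

lemma IsTree.natCard_sum_edgeSet [Fintype V] (hT : T.IsTree) :
    Nat.card (V ⊕ T.edgeSet) = 2 * Fintype.card V - 1 := by
  classical
  have := hT.card_edgeFinset
  rw [edgeFinset_card] at this
  rw [Nat.card_sum, Nat.card_eq_fintype_card, Nat.card_eq_fintype_card]
  omega

lemma tocDomNum_middleGraph_le_of_adj_adj_adj [Finite V] (hT : T.Preconnected) {u v y z : V}
    (huv : T.Adj u v) (huy : T.Adj u y) (hyv : y ≠ v) (hvz : T.Adj v z) (hzu : z ≠ u) :
    tocDomNum (middleGraph T) ≤ Nat.card (V ⊕ T.edgeSet) - 2 := by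
  have : Nontrivial V := ⟨u, v, huv.ne⟩
  have hD := isTOCDomSet_middleGraph_compl_pair hT.exists_adj_of_nontrivial huv huy hyv hvz hzu
  calc tocDomNum (middleGraph T)
      ≤ ({Sum.inl u, Sum.inr ⟨s(u, v), huv⟩}ᶜ : Set (V ⊕ T.edgeSet)).ncard :=
        tocDomNum_le hD
    _ = Nat.card (V ⊕ T.edgeSet) - 2 := by
      rw [Set.ncard_compl, Set.ncard_pair (by simp)]

lemma tocDomNum_middleGraph_starGraph [Fintype V] [Nontrivial V] (c : V) :
    tocDomNum (middleGraph (starGraph c)) = 2 * Fintype.card V - 2 := by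
  have hcard := (isTree_starGraph c).natCard_sum_edgeSet
  have hD₀ := isTOCDomSet_middleGraph_compl_singleton
    (connected_starGraph c).preconnected.exists_adj_of_nontrivial c
  have hD₀card : ({Sum.inl c}ᶜ : Set (V ⊕ (starGraph c).edgeSet)).ncard
      = 2 * Fintype.card V - 2 := by
    rw [Set.ncard_compl, Set.ncard_singleton, hcard]
    omega
  refine le_antisymm (hD₀card ▸ tocDomNum_le hD₀) (le_tocDomNum ⟨_, hD₀⟩ fun D hD => ?_)
  have := hD.ncard_compl_le_one_of_starGraph
  have := Set.ncard_compl_add_ncard D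
  omega

end MiddleGraph

end SimpleGraph

theorem stmt8 {V : Type*} [Fintype V] (T : SimpleGraph V) (hT : T.IsTree)
    (hn : 4 ≤ Fintype.card V) :
    tocDomNum (middleGraph T) = 2 * Fintype.card V - 2 ↔
      Nonempty (T ≃g completeBipartiteGraph (Fin 1) (Fin (Fintype.card V - 1))) := by
  have hcard := hT.natCard_sum_edgeSet
  have : Nontrivial V := Fintype.one_lt_card_iff_nontrivial.mp (by omega)
  rw [nonempty_iso_completeBipartiteGraph_iff]
  constructor
  · intro h
    by_contra! hstar
    obtain ⟨u, v, y, z, huv, huy, hyv, hvz, hzu⟩ :=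
      exists_adj_adj_adj_of_forall_ne_starGraph hT.connected hstar
    have := tocDomNum_middleGraph_le_of_adj_adj_adj hT.connected.preconnected huv huy hyv hvz hzu
    omega
  · rintro ⟨c, rfl⟩
    exact tocDomNum_middleGraph_starGraph c
end

section
/- Let T be a tree of order n ≥ 4 with diameter 2 or 3. Then γ_tc(M(T)) = 2·|Leaf(T)|. -/
open SimpleGraph

/-!
In a tree of diameter at most 3 any two inner vertices are adjacent (otherwise their path, extended
by one edge at each end, would have length at least 4), so by acyclicity every inner vertex carries
a leaf. In `M(T)` the only neighbour of a leaf is its pendant edge, so a total dominating set `D`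
contains every pendant edge; if `D` also misses a leaf, that leaf is isolated in `M(T) - D`, and
connectivity forces `D` to be everything but that leaf. Either way `|D| ≥ |Leaf(T)| + |pendant
edges|`, and the leaves with the pendant edges attain this: what remains, the inner vertices and
inner edges, is connected through the clique of inner vertices. Leaves are pairwise non-adjacent,
so there are as many pendant edges as leaves.
-/

namespace SimpleGraph

variable {V : Type*} {G : SimpleGraph V}

lemma Walk.mem_of_adj_closed {S : Set V} (hS : ∀ a b, a ∈ S → G.Adj a b → b ∈ S) {a b : V}
    (p : G.Walk a b) (ha : a ∈ S) : b ∈ S := by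
  induction p with
  | nil => exact ha
  | cons h _ ih => exact ih (hS _ _ ha h)

lemma Preconnected.eq_of_forall_not_adj {W : Type*} {H : SimpleGraph W} (hH : H.Preconnected)
    {a : W} (ha : ∀ b, ¬ H.Adj a b) (b : W) : b = a := by
  by_contra hba
  obtain ⟨p⟩ := hH a b
  exact ha _ (p.adj_snd (p.not_nil_of_ne (Ne.symm hba)))

section Leaves

variable {l u x v w : V}

lemma adj_of_neighborSet_eq_singleton (h : G.neighborSet l = {u}) : G.Adj l u :=
  (Set.eq_singleton_iff_unique_mem.mp h).1

lemma eq_of_neighborSet_eq_singleton (h : G.neighborSet l = {u}) (hx : G.Adj l x) : x = u :=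
  (Set.eq_singleton_iff_unique_mem.mp h).2 x hx

lemma exists_adj_ne_of_notMem_leafSet (hv : v ∉ leafSet G) (hw : G.Adj v w) :
    ∃ x, G.Adj v x ∧ x ≠ w := by
  by_contra! h
  exact hv ⟨w, Set.eq_singleton_iff_unique_mem.mpr ⟨hw, h⟩⟩

lemma edge_eq_of_neighborSet_eq_singleton (h : G.neighborSet l = {u}) {e : Sym2 V}
    (he : e ∈ G.edgeSet) (hl : l ∈ e) : e = s(l, u) := by
  obtain ⟨x, rfl⟩ := Sym2.mem_iff_exists.mp hl
  rw [eq_of_neighborSet_eq_singleton h (G.mem_edgeSet.mp he)]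

def pendantEdgeSet (G : SimpleGraph V) : Set G.edgeSet :=
  {e | ∃ l ∈ leafSet G, l ∈ (e : Sym2 V)}

lemma mk_mem_pendantEdgeSet (h : G.Adj v l) (hl : l ∈ leafSet G) :
    (⟨s(v, l), h⟩ : G.edgeSet) ∈ pendantEdgeSet G :=
  ⟨l, hl, Sym2.mem_mk_right v l⟩

lemma ncard_pendantEdgeSet (hG : G.IsIndepSet (leafSet G)) :
    (pendantEdgeSet G).ncard = (leafSet G).ncard := by
  refine (Set.ncard_congr (fun l (hl : l ∈ leafSet G) => (⟨s(l, hl.choose),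
    adj_of_neighborSet_eq_singleton hl.choose_spec⟩ : G.edgeSet))
    (t := pendantEdgeSet G) (fun l hl => ⟨l, hl, Sym2.mem_mk_left _ _⟩) ?_ ?_).symm
  · intro l l' hl hl' hll'
    rcases Sym2.eq_iff.mp (congrArg Subtype.val hll') with ⟨h, -⟩ | ⟨h, -⟩
    · exact h
    · by_contra hne
      have hadj := adj_of_neighborSet_eq_singleton hl'.choose_spec
      rw [← h] at hadj
      exact hG hl hl' hne hadj.symm
  · rintro e ⟨l, hl, hle⟩
    exact ⟨l, hl, Subtype.ext (edge_eq_of_neighborSet_eq_singleton hl.choose_spec e.2 hle).symm⟩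

lemma Connected.isIndepSet_leafSet [Finite V] (hG : G.Connected) (hV : 2 < Nat.card V) :
    G.IsIndepSet (leafSet G) := by
  rintro l ⟨u', hl⟩ u ⟨l', hu⟩ - hlu
  obtain rfl := eq_of_neighborSet_eq_singleton hl hlu
  obtain rfl := eq_of_neighborSet_eq_singleton hu hlu.symm
  have hclosed : ∀ a b, a ∈ ({l, u} : Set V) → G.Adj a b → b ∈ ({l, u} : Set V) := by
    rintro a b (rfl | rfl) hab
    · exact Or.inr (eq_of_neighborSet_eq_singleton hl hab)
    · exact Or.inl (eq_of_neighborSet_eq_singleton hu hab)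
  have huniv : ({l, u} : Set V) = Set.univ :=
    Set.eq_univ_of_forall fun w => ((hG l w).some).mem_of_adj_closed hclosed (Or.inl rfl)
  have := Set.ncard_insert_le l {u}
  rw [huniv, Set.ncard_univ, Set.ncard_singleton] at this
  omega

lemma Connected.exists_notMem_leafSet [Finite V] (hG : G.Connected) (hV : 2 < Nat.card V) :
    ∃ v, v ∉ leafSet G := by
  obtain ⟨v⟩ := hG.nonempty
  by_cases hv : v ∈ leafSet G
  · obtain ⟨u, hu⟩ := hv
    exact ⟨u, fun hu' => hG.isIndepSet_leafSet hV ⟨u, hu⟩ hu'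
      (adj_of_neighborSet_eq_singleton hu).ne (adj_of_neighborSet_eq_singleton hu)⟩
  · exact ⟨v, hv⟩

end Leaves

section Trees

variable {u v w : V}

lemma IsTree.dist_eq_length_of_isPath (hG : G.IsTree) {p : G.Walk u v} (hp : p.IsPath) :
    G.dist u v = p.length := by
  obtain ⟨q, hq, hlen⟩ := (hG.connected u v).exists_path_of_dist
  rw [← hlen, (hG.existsUnique_path u v).unique hq hp]

lemma IsAcyclic.exists_isPath_cons_of_notMem_leafSet (hG : G.IsAcyclic) {p : G.Walk u v}
    (hp : p.IsPath) (hnil : ¬ p.Nil) (hu : u ∉ leafSet G) :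
    ∃ x, ∃ h : G.Adj x u, (Walk.cons h p).IsPath := by
  obtain ⟨x, hux, hx⟩ := exists_adj_ne_of_notMem_leafSet hu (p.adj_snd hnil)
  exact ⟨x, hux.symm, hp.cons fun hmem => hx (hG.eq_snd_of_adj_start hp hux hmem)⟩

theorem IsTree.isClique_compl_leafSet (hG : G.IsTree) (hfin : G.ediam ≠ ⊤) (hdiam : G.diam ≤ 3) :
    G.IsClique (leafSet G)ᶜ := by
  intro a ha b hb hab
  by_contra hnadj
  obtain ⟨p, hp, hlen⟩ := (hG.connected a b).exists_path_of_dist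
  have h2 : 1 < p.length := hlen ▸ (hG.connected a b).one_lt_dist_of_ne_of_not_adj hab hnadj
  obtain ⟨x, hxa, hpx⟩ := hG.isAcyclic.exists_isPath_cons_of_notMem_leafSet hp
    (p.not_nil_of_ne hab) ha
  obtain ⟨y, hyb, hpy⟩ := hG.isAcyclic.exists_isPath_cons_of_notMem_leafSet hpx.reverse
    (by rw [← Walk.length_eq_zero_iff]; simp) hb
  have hyx : G.dist y x = p.length + 2 := by simpa using hG.dist_eq_length_of_isPath hpy
  have := dist_le_diam hfin (u := y) (v := x)
  omega

lemma IsAcyclic.exists_adj_mem_leafSet (hG : G.IsAcyclic) (hclique : G.IsClique (leafSet G)ᶜ)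
    (hv : v ∉ leafSet G) (hw : G.Adj v w) : ∃ l ∈ leafSet G, G.Adj v l := by
  classical
  obtain ⟨x, hvx, hxw⟩ := exists_adj_ne_of_notMem_leafSet hv hw
  by_contra! h
  have hwx : G.Adj w x := hclique (fun hl => h w hl hw) (fun hl => h x hl hvx) hxw.symm
  exact hG.cliqueFree le_rfl {v, w, x} (is3Clique_triple_iff.mpr ⟨hw, hvx, hwx⟩)

end Trees

end SimpleGraph

section MiddleGraph

variable {V : Type*} {G : SimpleGraph V} {D : Set (V ⊕ G.edgeSet)}

lemma tocDomNum_eq_ncard {W : Type*} {H : SimpleGraph W} {D : Set W} (hD : IsTOCDomSet H D)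
    (hmin : ∀ D', IsTOCDomSet H D' → D.ncard ≤ D'.ncard) : tocDomNum H = D.ncard :=
  le_antisymm (Nat.sInf_le ⟨D, hD, rfl⟩) (le_csInf ⟨_, D, hD, rfl⟩ (by
    rintro _ ⟨D', hD', rfl⟩
    exact hmin D' hD'))

def leafPendantSet (G : SimpleGraph V) : Set (V ⊕ G.edgeSet) :=
  Sum.inl '' leafSet G ∪ Sum.inr '' pendantEdgeSet G

@[simp] lemma inl_mem_leafPendantSet {v : V} : Sum.inl v ∈ leafPendantSet G ↔ v ∈ leafSet G := by
  simp [leafPendantSet]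

@[simp] lemma inr_mem_leafPendantSet {e : G.edgeSet} :
    Sum.inr e ∈ leafPendantSet G ↔ e ∈ pendantEdgeSet G := by
  simp [leafPendantSet]

lemma ncard_leafPendantSet [Finite V] :
    (leafPendantSet G).ncard = (leafSet G).ncard + (pendantEdgeSet G).ncard := by
  rw [leafPendantSet, Set.ncard_union_eq (by simp [Set.disjoint_left]),
    Set.ncard_image_of_injective _ Sum.inl_injective,
    Set.ncard_image_of_injective _ Sum.inr_injective]

lemma inr_mem_of_isTotalDomSet (hD : IsTotalDomSet (middleGraph G) D) {e : G.edgeSet}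
    (he : e ∈ pendantEdgeSet G) : Sum.inr e ∈ D := by
  obtain ⟨l, ⟨u, hu⟩, hle⟩ := he
  obtain ⟨_ | f, hf, hlf⟩ := hD (Sum.inl l)
  · exact hlf.elim
  · have hfe : f = e := Subtype.ext ((edge_eq_of_neighborSet_eq_singleton hu f.2 hlf).trans
      (edge_eq_of_neighborSet_eq_singleton hu e.2 hle).symm)
    exact hfe ▸ hf

lemma compl_eq_singleton_of_inl_notMem (hD : IsTOCDomSet (middleGraph G) D) {l : V}
    (hl : l ∈ leafSet G) (hlD : Sum.inl l ∉ D) : Dᶜ = {Sum.inl l} := by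
  have hisolated : ∀ z, ¬ ((middleGraph G).induce Dᶜ).Adj ⟨Sum.inl l, hlD⟩ z := by
    rintro ⟨_ | e, he⟩ hadj
    · exact hadj
    · exact he (inr_mem_of_isTotalDomSet hD.1 ⟨l, hl, hadj⟩)
  refine Set.eq_singleton_iff_unique_mem.mpr ⟨hlD, fun z hz => ?_⟩
  exact congrArg Subtype.val (hD.2.preconnected.eq_of_forall_not_adj hisolated ⟨z, hz⟩)

theorem ncard_leafPendantSet_le_of_isTOCDomSet [Finite V] (hG : ∃ v, v ∉ leafSet G)
    (hD : IsTOCDomSet (middleGraph G) D) : (leafPendantSet G).ncard ≤ D.ncard := by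
  by_cases hmiss : ∃ l ∈ leafSet G, Sum.inl l ∉ D
  · obtain ⟨l, hl, hlD⟩ := hmiss
    have hsum := Set.ncard_add_ncard_compl D
    rw [compl_eq_singleton_of_inl_notMem hD hl hlD, Set.ncard_singleton, Nat.card_sum] at hsum
    obtain ⟨v, hv⟩ := hG
    have hL : (leafSet G).ncard < Nat.card V :=
      Set.ncard_lt_card fun h => hv (h ▸ Set.mem_univ v)
    have hP := Set.ncard_le_card (pendantEdgeSet G)
    rw [ncard_leafPendantSet]
    omega
  · refine Set.ncard_le_ncard ?_
    rintro (v | e) h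
    · exact not_not.mp fun hv => hmiss ⟨v, inl_mem_leafPendantSet.mp h, hv⟩
    · exact inr_mem_of_isTotalDomSet hD.1 (inr_mem_leafPendantSet.mp h)

lemma isTotalDomSet_leafPendantSet (hsupp : ∀ v ∉ leafSet G, ∃ l ∈ leafSet G, G.Adj v l) :
    IsTotalDomSet (middleGraph G) (leafPendantSet G) := by
  rintro (v | ⟨e, he⟩)
  · by_cases hv : v ∈ leafSet G
    · obtain ⟨u, hu⟩ := id hv
      have hvu := adj_of_neighborSet_eq_singleton hu
      exact ⟨Sum.inr ⟨s(u, v), hvu.symm⟩, inr_mem_leafPendantSet.mpr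
        (mk_mem_pendantEdgeSet hvu.symm hv), Sym2.mem_mk_right u v⟩
    · obtain ⟨l, hl, hvl⟩ := hsupp v hv
      exact ⟨Sum.inr ⟨s(v, l), hvl⟩, inr_mem_leafPendantSet.mpr (mk_mem_pendantEdgeSet hvl hl),
        Sym2.mem_mk_left v l⟩
  · induction e using Sym2.ind with | _ x y => ?_
    by_cases hx : x ∈ leafSet G
    · exact ⟨Sum.inl x, inl_mem_leafPendantSet.mpr hx, Sym2.mem_mk_left x y⟩
    by_cases hy : y ∈ leafSet G
    · exact ⟨Sum.inl y, inl_mem_leafPendantSet.mpr hy, Sym2.mem_mk_right x y⟩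
    obtain ⟨l, hl, hxl⟩ := hsupp x hx
    refine ⟨Sum.inr ⟨s(x, l), hxl⟩, inr_mem_leafPendantSet.mpr (mk_mem_pendantEdgeSet hxl hl),
      fun hxy => ?_, x, Sym2.mem_mk_left x y, Sym2.mem_mk_left x l⟩
    exact hy (Sym2.congr_right.mp (congrArg Subtype.val hxy) ▸ hl)

lemma connected_induce_compl_leafPendantSet (hclique : G.IsClique (leafSet G)ᶜ) {c : V}
    (hc : c ∉ leafSet G) : ((middleGraph G).induce (leafPendantSet G)ᶜ).Connected := by
  set H := (middleGraph G).induce (leafPendantSet G)ᶜ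
  have hcD : Sum.inl c ∉ leafPendantSet G := fun h => hc (inl_mem_leafPendantSet.mp h)
  have hinl : ∀ v (hv : Sum.inl v ∉ leafPendantSet G),
      H.Reachable ⟨_, hcD⟩ ⟨Sum.inl v, hv⟩ := by
    intro v hv
    by_cases hvc : v = c
    · subst hvc
      rfl
    have hcv : G.Adj c v := hclique hc (fun h => hv (inl_mem_leafPendantSet.mpr h)) (Ne.symm hvc)
    have he : Sum.inr ⟨s(c, v), hcv⟩ ∉ leafPendantSet G := by
      rintro h
      obtain ⟨l, hl, hle⟩ := inr_mem_leafPendantSet.mp h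
      rcases Sym2.mem_iff.mp hle with rfl | rfl
      · exact hc hl
      · exact hv (inl_mem_leafPendantSet.mpr hl)
    have hce : H.Adj ⟨_, hcD⟩ ⟨_, he⟩ := Sym2.mem_mk_left c v
    have hev : H.Adj ⟨_, he⟩ ⟨_, hv⟩ := Sym2.mem_mk_right c v
    exact hce.reachable.trans hev.reachable
  refine (connected_iff_exists_forall_reachable H).mpr ⟨⟨_, hcD⟩, ?_⟩
  rintro ⟨v | ⟨e, he⟩, hz⟩
  · exact hinl v hz
  · induction e using Sym2.ind with | _ x y => ?_
    have hx : Sum.inl x ∉ leafPendantSet G := fun h =>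
      hz (inr_mem_leafPendantSet.mpr ⟨x, inl_mem_leafPendantSet.mp h, Sym2.mem_mk_left x y⟩)
    have hxe : H.Adj ⟨_, hx⟩ ⟨_, hz⟩ := Sym2.mem_mk_left x y
    exact (hinl x hx).trans hxe.reachable

theorem tocDomNum_middleGraph [Finite V] (hclique : G.IsClique (leafSet G)ᶜ)
    (hsupp : ∀ v ∉ leafSet G, ∃ l ∈ leafSet G, G.Adj v l) {c : V} (hc : c ∉ leafSet G) :
    tocDomNum (middleGraph G) = (leafSet G).ncard + (pendantEdgeSet G).ncard := by
  rw [← ncard_leafPendantSet]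
  exact tocDomNum_eq_ncard
    ⟨isTotalDomSet_leafPendantSet hsupp, connected_induce_compl_leafPendantSet hclique hc⟩
    fun D hD => ncard_leafPendantSet_le_of_isTOCDomSet ⟨c, hc⟩ hD

end MiddleGraph

theorem stmt12_general {V : Type*} [Fintype V] (T : SimpleGraph V) (hT : T.IsTree)
    (hn : 4 ≤ Fintype.card V) (hdiam2 : T.diam ≤ 3) :
    tocDomNum (middleGraph T) = 2 * (leafSet T).ncard := by
  have hV : 2 < Nat.card V := by
    rw [Nat.card_eq_fintype_card]
    omega
  have : Nontrivial V := Finite.one_lt_card_iff_nontrivial.mp (by omega)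
  have hclique := hT.isClique_compl_leafSet (connected_iff_ediam_ne_top.mp hT.connected) hdiam2
  have hsupp : ∀ v ∉ leafSet T, ∃ l ∈ leafSet T, T.Adj v l := fun v hv =>
    hT.isAcyclic.exists_adj_mem_leafSet hclique hv
      (hT.connected.preconnected.exists_adj_of_nontrivial v).choose_spec
  obtain ⟨c, hc⟩ := hT.connected.exists_notMem_leafSet hV
  rw [tocDomNum_middleGraph hclique hsupp hc,
    ncard_pendantEdgeSet (hT.connected.isIndepSet_leafSet hV)]
  ring

theorem stmt12 {V : Type*} [Fintype V] (T : SimpleGraph V) (hT : T.IsTree)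
    (hn : 4 ≤ Fintype.card V) (hdiam1 : 2 ≤ T.diam) (hdiam2 : T.diam ≤ 3) :
    tocDomNum (middleGraph T) = 2 * (leafSet T).ncard :=
  stmt12_general T hT hn hdiam2
end
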